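/- (Dominance for ε-approximately k-smooth graph functions.) If f is ε-approximately k-smooth and nonzero at every vertex, then for all vertices i, j with w_ij = 1, the modified Laplacian-walk proposal satisfies Q'_{ij} ≥ (1/M) p_f(j), where M = k + 2k√n ε + n ε². -/

import Mathlib

/-! Write `c i = ‖U_kᵀ δ_i‖`. Since `f_ks = U_k U_kᵀ f` is an orthogonal projection of `f`,
Cauchy–Schwarz on the `i`-th row of `U_k` gives `|f_ks(i)| ≤ c i ‖f_ks‖ ≤ c i ‖f‖`, so approximate
smoothness yields `|f i| ≤ (c i + ε) ‖f‖`, i.e. `p_f(i) ≤ (c i + ε)²`. Orthonormality of the columns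
gives `∑ c i² = k`, hence `∑ c i ≤ √(n k) ≤ √n k` and `∑ (c l + ε)² ≤ M`. The normaliser of `Q'`
is at most that sum, so `Q'_{ij} ≥ (c j + ε)² / M ≥ p_f(j) / M`. -/

/-- The local cumulative coherence of order `k` at node `i`: the Euclidean norm
`‖U_kᵀ δ_i‖₂`, where `δ_i` is the `i`-th standard basis vector of `ℝ^n`. -/
noncomputable def localCoherence {n k : ℕ} (Uk : Matrix (Fin n) (Fin k) ℝ)
    (i : Fin n) : ℝ :=
  Real.sqrt (∑ l, (Uk.transpose.mulVec (Pi.single i 1) l) ^ 2)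

open Matrix Finset

theorem sum_sq_eq_dotProduct_self {ι : Type*} [Fintype ι] (v : ι → ℝ) :
    ∑ i, v i ^ 2 = v ⬝ᵥ v := by
  simp only [dotProduct, sq]

theorem abs_mulVec_apply_le {m κ : Type*} [Fintype κ] (A : Matrix m κ ℝ) (g : κ → ℝ) (i : m) :
    |(A *ᵥ g) i| ≤ √(∑ l, A i l ^ 2) * √(∑ l, g l ^ 2) :=
  (Real.abs_le_sqrt (sum_mul_sq_le_sq_mul_sq _ _ _)).trans_eq (Real.sqrt_mul (by positivity) _)

section OrthonormalColumns

variable {m κ : Type*} [Fintype m] [Fintype κ] [DecidableEq κ] {U : Matrix m κ ℝ}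

theorem mulVec_dotProduct_mulVec_self (hU : Uᵀ * U = 1) (g : κ → ℝ) :
    U *ᵥ g ⬝ᵥ U *ᵥ g = g ⬝ᵥ g := by
  rw [dotProduct_mulVec, ← mulVec_transpose, mulVec_mulVec, hU, one_mulVec]

theorem transpose_mulVec_dotProduct_self_le (hU : Uᵀ * U = 1) (f : m → ℝ) :
    Uᵀ *ᵥ f ⬝ᵥ Uᵀ *ᵥ f ≤ f ⬝ᵥ f := by
  set g := Uᵀ *ᵥ f
  have hproj : f ⬝ᵥ U *ᵥ g = g ⬝ᵥ g := by rw [dotProduct_mulVec, ← mulVec_transpose]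
  have hres : 0 ≤ (f - U *ᵥ g) ⬝ᵥ (f - U *ᵥ g) := Fintype.sum_nonneg fun _ => mul_self_nonneg _
  rw [sub_dotProduct, dotProduct_sub, dotProduct_sub, dotProduct_comm (U *ᵥ g) f, hproj,
    mulVec_dotProduct_mulVec_self hU] at hres
  linarith

end OrthonormalColumns

section LocalCoherence

variable {n k : ℕ} {Uk : Matrix (Fin n) (Fin k) ℝ}

theorem localCoherence_eq (Uk : Matrix (Fin n) (Fin k) ℝ) (i : Fin n) :
    localCoherence Uk i = √(∑ l, Uk i l ^ 2) := by
  simp [localCoherence]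

theorem localCoherence_nonneg (Uk : Matrix (Fin n) (Fin k) ℝ) (i : Fin n) :
    0 ≤ localCoherence Uk i :=
  Real.sqrt_nonneg _

theorem sum_localCoherence_sq (hU : Ukᵀ * Uk = 1) : ∑ i, localCoherence Uk i ^ 2 = k := by
  have hcol : ∀ l, ∑ i, Uk i l ^ 2 = 1 := fun l => by
    simpa [mul_apply, sq] using congrFun (congrFun hU l) l
  simp_rw [localCoherence_eq, Real.sq_sqrt (Fintype.sum_nonneg fun _ => sq_nonneg _)]
  rw [sum_comm]
  simp [hcol]

theorem sum_localCoherence_le (hU : Ukᵀ * Uk = 1) : ∑ i, localCoherence Uk i ≤ √n * k := by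
  have hcs : (∑ i, localCoherence Uk i) ^ 2 ≤ n * k := by
    simpa [sum_localCoherence_sq hU] using
      sq_sum_le_card_mul_sum_sq (s := univ) (f := localCoherence Uk)
  have hk : √(k : ℝ) ≤ k := by
    rw [Real.sqrt_le_left (Nat.cast_nonneg k)]
    exact_mod_cast Nat.le_self_pow two_ne_zero k
  calc ∑ i, localCoherence Uk i ≤ √(n * k) := Real.le_sqrt_of_sq_le hcs
    _ = √n * √k := Real.sqrt_mul (Nat.cast_nonneg n) _
    _ ≤ √n * k := by gcongr

theorem sum_localCoherence_add_sq_le (hU : Ukᵀ * Uk = 1) {ε : ℝ} (hε : 0 ≤ ε) :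
    ∑ i, (localCoherence Uk i + ε) ^ 2 ≤ k + 2 * k * √n * ε + n * ε ^ 2 := by
  have hexpand : ∑ i, (localCoherence Uk i + ε) ^ 2
      = ∑ i, localCoherence Uk i ^ 2 + 2 * ε * ∑ i, localCoherence Uk i + n * ε ^ 2 := by
    simp only [add_sq, sum_add_distrib, ← sum_mul, ← mul_sum, sum_const, card_univ,
      Fintype.card_fin, nsmul_eq_mul]
    ring
  have hcross := mul_le_mul_of_nonneg_left (sum_localCoherence_le hU) hε
  rw [hexpand, sum_localCoherence_sq hU]
  linarith

end LocalCoherence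

section ApproximatelySmooth

variable {n k : ℕ} {Uk : Matrix (Fin n) (Fin k) ℝ} {f fks : Fin n → ℝ} {ε : ℝ}

theorem abs_le_localCoherence_add_mul_sqrt (hU : Ukᵀ * Uk = 1) (hε : 0 ≤ ε)
    (hfks : fks = Uk *ᵥ (Ukᵀ *ᵥ f)) (happrox : ∀ i, |f i - fks i| ≤ ε * √(∑ j, fks j ^ 2))
    (i : Fin n) : |f i| ≤ (localCoherence Uk i + ε) * √(∑ j, f j ^ 2) := by
  set g := Ukᵀ *ᵥ f
  have hnorm : ∑ j, fks j ^ 2 = ∑ l, g l ^ 2 := by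
    rw [hfks, sum_sq_eq_dotProduct_self, sum_sq_eq_dotProduct_self,
      mulVec_dotProduct_mulVec_self hU]
  have hbessel : √(∑ l, g l ^ 2) ≤ √(∑ j, f j ^ 2) := by
    rw [sum_sq_eq_dotProduct_self, sum_sq_eq_dotProduct_self]
    exact Real.sqrt_le_sqrt (transpose_mulVec_dotProduct_self_le hU f)
  have hsmooth : |fks i| ≤ localCoherence Uk i * √(∑ l, g l ^ 2) := by
    rw [hfks, localCoherence_eq]
    exact abs_mulVec_apply_le Uk g i
  have hc := localCoherence_nonneg Uk i
  calc |f i| ≤ |fks i| + |f i - fks i| := by linarith [abs_sub_abs_le_abs_sub (f i) (fks i)]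
    _ ≤ localCoherence Uk i * √(∑ l, g l ^ 2) + ε * √(∑ l, g l ^ 2) :=
      add_le_add hsmooth (hnorm ▸ happrox i)
    _ = (localCoherence Uk i + ε) * √(∑ l, g l ^ 2) := by ring
    _ ≤ (localCoherence Uk i + ε) * √(∑ j, f j ^ 2) := by gcongr

theorem sq_div_sum_sq_le_localCoherence_add_sq (hU : Ukᵀ * Uk = 1) (hε : 0 ≤ ε)
    (hfks : fks = Uk *ᵥ (Ukᵀ *ᵥ f)) (happrox : ∀ i, |f i - fks i| ≤ ε * √(∑ j, fks j ^ 2))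
    (i : Fin n) : f i ^ 2 / ∑ j, f j ^ 2 ≤ (localCoherence Uk i + ε) ^ 2 := by
  have habs := abs_le_localCoherence_add_mul_sqrt hU hε hfks happrox i
  refine div_le_of_le_mul₀ (by positivity) (sq_nonneg _) ?_
  calc f i ^ 2 = |f i| ^ 2 := (sq_abs _).symm
    _ ≤ ((localCoherence Uk i + ε) * √(∑ j, f j ^ 2)) ^ 2 := by gcongr
    _ = (localCoherence Uk i + ε) ^ 2 * ∑ j, f j ^ 2 := by
      rw [mul_pow, Real.sq_sqrt (by positivity)]

end ApproximatelySmooth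

theorem laplacian_walk_dominance_approx_ksmooth_general
    {n : ℕ}
    (W : Matrix (Fin n) (Fin n) ℝ)
    (hW01 : ∀ i j, W i j = 0 ∨ W i j = 1)
    {k : ℕ}
    (Uk : Matrix (Fin n) (Fin k) ℝ)
    (hU : Uk.transpose * Uk = 1)
    (f : Fin n → ℝ) (ε : ℝ) (hε : 0 < ε)
    (fks : Fin n → ℝ) (hfks : fks = Uk.mulVec (Uk.transpose.mulVec f))
    (happrox : ∀ i, |f i - fks i| ≤ ε * Real.sqrt (∑ j, fks j ^ 2))
    (pf : Fin n → ℝ) (hpf : ∀ i, pf i = f i ^ 2 / ∑ j, f j ^ 2)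
    (Q' : Matrix (Fin n) (Fin n) ℝ)
    (hQ' : ∀ i j, Q' i j =
      W i j * (localCoherence Uk j + ε) ^ 2 / ∑ l, W i l * (localCoherence Uk l + ε) ^ 2)
    (i j : Fin n) (hij : W i j = 1) :
    (1 / ((k : ℝ) + 2 * k * Real.sqrt n * ε + n * ε ^ 2)) * pf j ≤ Q' i j := by
  set a : Fin n → ℝ := fun l => (localCoherence Uk l + ε) ^ 2
  have ha : ∀ l, 0 < a l := fun l =>
    pow_pos (add_pos_of_nonneg_of_pos (localCoherence_nonneg Uk l) hε) 2
  have hterm : ∀ l, 0 ≤ W i l * a l ∧ W i l * a l ≤ a l := fun l => by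
    rcases hW01 i l with h | h <;> simp [h, (ha l).le]
  have hD_le : ∑ l, W i l * a l ≤ k + 2 * k * √n * ε + n * ε ^ 2 :=
    (sum_le_sum fun l _ => (hterm l).2).trans (sum_localCoherence_add_sq_le hU hε.le)
  have hD_ge : a j ≤ ∑ l, W i l * a l := by
    simpa [hij] using single_le_sum (fun l _ => (hterm l).1) (mem_univ j)
  have hpf_le : pf j ≤ a j :=
    hpf j ▸ sq_div_sum_sq_le_localCoherence_add_sq hU hε.le hfks happrox j
  rw [hQ', hij, one_mul, one_div_mul_eq_div]
  calc pf j / _ ≤ a j / (k + 2 * k * √n * ε + n * ε ^ 2) := by gcongr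
    _ ≤ a j / ∑ l, W i l * a l :=
      div_le_div_of_nonneg_left (ha j).le ((ha j).trans_le hD_ge) hD_le

/-- Dominance for `ε`-approximately `k`-smooth graph functions: if `f`
is `ε`-approximately `k`-smooth and nonzero at every vertex, then for all vertices
`i, j` with `w i j = 1`, the modified Laplacian-walk proposal
`Q'_{ij} = w_ij (‖U_kᵀ δ_j‖₂ + ε)² / Σ_{l : w_il = 1} (‖U_kᵀ δ_l‖₂ + ε)²`
satisfies `Q'_{ij} ≥ (1/M) p_f(j)`, where `M = k + 2k√n ε + n ε²`.  (Since `W` is a 0/1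
matrix, the sum over `{l : w_il = 1}` is encoded via multiplication by `W i l`.) -/
theorem laplacian_walk_dominance_approx_ksmooth
    {n : ℕ} (hn : 2 ≤ n)
    (W : Matrix (Fin n) (Fin n) ℝ)
    (hWsymm : ∀ i j, W i j = W j i)
    (hW01 : ∀ i j, W i j = 0 ∨ W i j = 1)
    (hWdiag : ∀ i, W i i = 0)
    (hWconn : ∀ i j : Fin n, ∃ m : ℕ, ∃ v : Fin (m + 1) → Fin n,
      v 0 = i ∧ v (Fin.last m) = j ∧ ∀ l : Fin m, W (v l.castSucc) (v l.succ) = 1)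
    (hdegpos : ∀ i, 0 < ∑ j, W i j)
    {k : ℕ} (hk1 : 1 ≤ k) (hkn : k ≤ n)
    (Uk : Matrix (Fin n) (Fin k) ℝ)
    (hU : Uk.transpose * Uk = 1)
    (f : Fin n → ℝ) (ε : ℝ) (hε : 0 < ε)
    (fks : Fin n → ℝ) (hfks : fks = Uk.mulVec (Uk.transpose.mulVec f))
    (happrox : ∀ i, |f i - fks i| ≤ ε * Real.sqrt (∑ j, fks j ^ 2))
    (hfne : ∀ i, f i ≠ 0)
    (pf : Fin n → ℝ) (hpf : ∀ i, pf i = f i ^ 2 / ∑ j, f j ^ 2)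
    (Q' : Matrix (Fin n) (Fin n) ℝ)
    (hQ' : ∀ i j, Q' i j =
      W i j * (localCoherence Uk j + ε) ^ 2 / ∑ l, W i l * (localCoherence Uk l + ε) ^ 2)
    (i j : Fin n) (hij : W i j = 1) :
    (1 / ((k : ℝ) + 2 * k * Real.sqrt n * ε + n * ε ^ 2)) * pf j ≤ Q' i j :=
  laplacian_walk_dominance_approx_ksmooth_general W hW01 Uk hU f ε hε fks hfks happrox pf hpf Q' hQ'
    i j hij
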